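/- arXiv:gr-qc/0404100 — 8 statements merged into one kernel-verified Lean document; each statement's English description precedes it below -/
import Mathlib

section
/- The observables A_{ij} = uᵢpⱼ − uⱼpᵢ, B_{ij} = wᵢϖⱼ − wⱼϖᵢ, and C_{ij} = −uᵢϖⱼ − pᵢwⱼ all Poisson-commute with both constraints H = (w² − u²)/2 and D = u·p + w·ϖ on the constraint surface H = D = 0; indeed A_{ij} and B_{ij} commute with H and D identically, and {H, C_{ij}} and {D, C_{ij}} vanish identically. -/
open scoped BigOperators

/-- The canonical Poisson bracket on T*ℝ^{p+q}. -/
noncomputable def poissonBracket (p q : ℕ)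
    (f g : ((Fin p → ℝ) × (Fin p → ℝ) × (Fin q → ℝ) × (Fin q → ℝ)) → ℝ)
    (x : (Fin p → ℝ) × (Fin p → ℝ) × (Fin q → ℝ) × (Fin q → ℝ)) : ℝ :=
  (∑ i, (fderiv ℝ f x (Pi.single i 1, 0, 0, 0) * fderiv ℝ g x (0, Pi.single i 1, 0, 0)
      - fderiv ℝ f x (0, Pi.single i 1, 0, 0) * fderiv ℝ g x (Pi.single i 1, 0, 0, 0)))
  + (∑ j, (fderiv ℝ f x (0, 0, Pi.single j 1, 0) * fderiv ℝ g x (0, 0, 0, Pi.single j 1)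
      - fderiv ℝ f x (0, 0, 0, Pi.single j 1) * fderiv ℝ g x (0, 0, Pi.single j 1, 0)))

noncomputable def Hfun (p q : ℕ)
    (x : (Fin p → ℝ) × (Fin p → ℝ) × (Fin q → ℝ) × (Fin q → ℝ)) : ℝ :=
  ((∑ j, (x.2.2.1 j)^2) - ∑ i, (x.1 i)^2) / 2

noncomputable def Dfun (p q : ℕ)
    (x : (Fin p → ℝ) × (Fin p → ℝ) × (Fin q → ℝ) × (Fin q → ℝ)) : ℝ :=
  (∑ i, x.1 i * x.2.1 i) + ∑ j, x.2.2.1 j * x.2.2.2 j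

/-- A_{ij} = uᵢpⱼ − uⱼpᵢ. -/
noncomputable def Afun (p q : ℕ) (i j : Fin p)
    (x : (Fin p → ℝ) × (Fin p → ℝ) × (Fin q → ℝ) × (Fin q → ℝ)) : ℝ :=
  x.1 i * x.2.1 j - x.1 j * x.2.1 i

/-- B_{ij} = wᵢϖⱼ − wⱼϖᵢ. -/
noncomputable def Bfun (p q : ℕ) (i j : Fin q)
    (x : (Fin p → ℝ) × (Fin p → ℝ) × (Fin q → ℝ) × (Fin q → ℝ)) : ℝ :=
  x.2.2.1 i * x.2.2.2 j - x.2.2.1 j * x.2.2.2 i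

/-- C_{ij} = −uᵢϖⱼ − pᵢwⱼ. -/
noncomputable def Cfun (p q : ℕ) (i : Fin p) (j : Fin q)
    (x : (Fin p → ℝ) × (Fin p → ℝ) × (Fin q → ℝ) × (Fin q → ℝ)) : ℝ :=
  -(x.1 i * x.2.2.2 j) - x.2.1 i * x.2.2.1 j

/-!
The bracket `{f, g}` is the derivative of `g` along the Hamiltonian vector field of `f`. For `D`
this field is `(-u, p, -w, ϖ)`, generating the scaling `(u, p, w, ϖ) ↦ (e⁻ᵗu, eᵗp, e⁻ᵗw, eᵗϖ)`,
under which every position-times-momentum product, hence each of `A`, `B`, `C`, is invariant.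
For `H` it is `(0, -u, 0, w)`, which moves only the momenta; the two terms of `A`, `B`, `C` then
vary at the opposite rates `±uᵢuⱼ`, `±wᵢwⱼ`, `±uᵢwⱼ`.
-/

abbrev PhaseSpace (p q : ℕ) := (Fin p → ℝ) × (Fin p → ℝ) × (Fin q → ℝ) × (Fin q → ℝ)

section PhaseSpace

open ContinuousLinearMap

variable {p q : ℕ}

lemma apply_eq_sum_coord (L : PhaseSpace p q →L[ℝ] ℝ) (v : PhaseSpace p q) :
    L v = ∑ i, v.1 i * L (Pi.single i 1, 0, 0, 0) + ∑ i, v.2.1 i * L (0, Pi.single i 1, 0, 0)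
      + ∑ j, v.2.2.1 j * L (0, 0, Pi.single j 1, 0) + ∑ j, v.2.2.2 j * L (0, 0, 0, Pi.single j 1) := by
  simp only [← smul_eq_mul, ← map_smul, ← map_sum, ← map_add]
  congr 1
  ext <;> simp [Prod.fst_sum, Prod.snd_sum, Pi.single_apply]

noncomputable def hamiltonianVectorField (f : PhaseSpace p q → ℝ) (x : PhaseSpace p q) :
    PhaseSpace p q :=
  (fun i => -fderiv ℝ f x (0, Pi.single i 1, 0, 0), fun i => fderiv ℝ f x (Pi.single i 1, 0, 0, 0),
    fun j => -fderiv ℝ f x (0, 0, 0, Pi.single j 1), fun j => fderiv ℝ f x (0, 0, Pi.single j 1, 0))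

lemma poissonBracket_eq_fderiv_hamiltonianVectorField (f g : PhaseSpace p q → ℝ)
    (x : PhaseSpace p q) :
    poissonBracket p q f g x = fderiv ℝ g x (hamiltonianVectorField f x) := by
  rw [apply_eq_sum_coord, poissonBracket]
  simp only [hamiltonianVectorField, Finset.sum_sub_distrib, neg_mul, Finset.sum_neg_distrib]
  ring

noncomputable def uCoord (i : Fin p) : PhaseSpace p q →L[ℝ] ℝ :=
  proj i ∘L fst ℝ _ _

noncomputable def pCoord (i : Fin p) : PhaseSpace p q →L[ℝ] ℝ :=
  proj i ∘L fst ℝ _ _ ∘L snd ℝ _ _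

noncomputable def wCoord (j : Fin q) : PhaseSpace p q →L[ℝ] ℝ :=
  proj j ∘L fst ℝ _ _ ∘L snd ℝ _ _ ∘L snd ℝ _ _

noncomputable def varpiCoord (j : Fin q) : PhaseSpace p q →L[ℝ] ℝ :=
  proj j ∘L snd ℝ _ _ ∘L snd ℝ _ _ ∘L snd ℝ _ _

@[simp] lemma uCoord_apply (i : Fin p) (v : PhaseSpace p q) : uCoord i v = v.1 i := rfl
@[simp] lemma pCoord_apply (i : Fin p) (v : PhaseSpace p q) : pCoord i v = v.2.1 i := rfl
@[simp] lemma wCoord_apply (j : Fin q) (v : PhaseSpace p q) : wCoord j v = v.2.2.1 j := rfl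
@[simp] lemma varpiCoord_apply (j : Fin q) (v : PhaseSpace p q) : varpiCoord j v = v.2.2.2 j := rfl

lemma hasFDerivAt_Hfun (x : PhaseSpace p q) :
    HasFDerivAt (Hfun p q) (∑ j, x.2.2.1 j • wCoord j - ∑ i, x.1 i • uCoord i) x := by
  have hH : Hfun p q = fun y => (∑ j, wCoord j y ^ 2 - ∑ i, uCoord i y ^ 2) * 2⁻¹ := by
    funext y
    simp [Hfun, div_eq_mul_inv]
  rw [hH]
  refine (((HasFDerivAt.fun_sum fun j _ => (wCoord j).hasFDerivAt.pow 2).fun_sub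
    (HasFDerivAt.fun_sum fun i _ => (uCoord i).hasFDerivAt.pow 2)).mul_const 2⁻¹).congr_fderiv
    (ContinuousLinearMap.ext fun v => ?_)
  simp [mul_sub, Finset.mul_sum, mul_assoc]

lemma hasFDerivAt_Dfun (x : PhaseSpace p q) :
    HasFDerivAt (Dfun p q) (∑ i, (x.1 i • pCoord i + x.2.1 i • uCoord i)
      + ∑ j, (x.2.2.1 j • varpiCoord j + x.2.2.2 j • wCoord j)) x :=
  (HasFDerivAt.fun_sum fun i _ => (uCoord i).hasFDerivAt.mul (pCoord i).hasFDerivAt).add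
    (HasFDerivAt.fun_sum fun j _ => (wCoord j).hasFDerivAt.mul (varpiCoord j).hasFDerivAt)

lemma hasFDerivAt_Afun (i j : Fin p) (x : PhaseSpace p q) :
    HasFDerivAt (Afun p q i j)
      (x.1 i • pCoord j + x.2.1 j • uCoord i - (x.1 j • pCoord i + x.2.1 i • uCoord j)) x :=
  ((uCoord i).hasFDerivAt.mul (pCoord j).hasFDerivAt).sub
    ((uCoord j).hasFDerivAt.mul (pCoord i).hasFDerivAt)

lemma hasFDerivAt_Bfun (i j : Fin q) (x : PhaseSpace p q) :
    HasFDerivAt (Bfun p q i j) (x.2.2.1 i • varpiCoord j + x.2.2.2 j • wCoord i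
      - (x.2.2.1 j • varpiCoord i + x.2.2.2 i • wCoord j)) x :=
  ((wCoord i).hasFDerivAt.mul (varpiCoord j).hasFDerivAt).sub
    ((wCoord j).hasFDerivAt.mul (varpiCoord i).hasFDerivAt)

lemma hasFDerivAt_Cfun (i : Fin p) (j : Fin q) (x : PhaseSpace p q) :
    HasFDerivAt (Cfun p q i j) (-(x.1 i • varpiCoord j + x.2.2.2 j • uCoord i)
      - (x.2.1 i • wCoord j + x.2.2.1 j • pCoord i)) x :=
  ((uCoord i).hasFDerivAt.mul (varpiCoord j).hasFDerivAt).neg.sub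
    ((pCoord i).hasFDerivAt.mul (wCoord j).hasFDerivAt)

lemma hamiltonianVectorField_Hfun (x : PhaseSpace p q) :
    hamiltonianVectorField (Hfun p q) x = (0, -x.1, 0, x.2.2.1) := by
  ext <;> simp [hamiltonianVectorField, (hasFDerivAt_Hfun x).fderiv, Pi.single_apply]

lemma hamiltonianVectorField_Dfun (x : PhaseSpace p q) :
    hamiltonianVectorField (Dfun p q) x = (-x.1, x.2.1, -x.2.2.1, x.2.2.2) := by
  ext <;> simp [hamiltonianVectorField, (hasFDerivAt_Dfun x).fderiv, Pi.single_apply]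

end PhaseSpace

/-- The observables A, B, C Poisson-commute with both constraints H and D,
identically on phase space (hence in particular on the constraint surface). -/
theorem observables_commute_with_constraints (p q : ℕ) :
    (∀ (i j : Fin p) x, poissonBracket p q (Hfun p q) (Afun p q i j) x = 0) ∧
    (∀ (i j : Fin p) x, poissonBracket p q (Dfun p q) (Afun p q i j) x = 0) ∧
    (∀ (i j : Fin q) x, poissonBracket p q (Hfun p q) (Bfun p q i j) x = 0) ∧
    (∀ (i j : Fin q) x, poissonBracket p q (Dfun p q) (Bfun p q i j) x = 0) ∧
    (∀ (i : Fin p) (j : Fin q) x, poissonBracket p q (Hfun p q) (Cfun p q i j) x = 0) ∧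
    (∀ (i : Fin p) (j : Fin q) x, poissonBracket p q (Dfun p q) (Cfun p q i j) x = 0) := by
  refine ⟨fun i j x => ?_, fun i j x => ?_, fun i j x => ?_, fun i j x => ?_, fun i j x => ?_,
    fun i j x => ?_⟩ <;>
  simp only [poissonBracket_eq_fderiv_hamiltonianVectorField, hamiltonianVectorField_Hfun,
    hamiltonianVectorField_Dfun, (hasFDerivAt_Afun _ _ x).fderiv, (hasFDerivAt_Bfun _ _ x).fderiv,
    (hasFDerivAt_Cfun _ _ x).fderiv, sub_apply, add_apply,
    neg_apply, smul_apply, uCoord_apply, pCoord_apply,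
    wCoord_apply, varpiCoord_apply, Pi.neg_apply, Pi.zero_apply, smul_eq_mul] <;>
  ring
end

section
/- On the constraint surface where H = (w² − u²)/2 = 0 and D = u·p + w·ϖ = 0, the quadratic form 𝒞 = Σ_{i<j} A_{ij}² + Σ_{i<j} B_{ij}² − Σ_{i,j} C_{ij}² vanishes identically. -/
/-!
By Lagrange's identity the two antisymmetric sums are `u²p² - (u·p)²` and `w²ϖ² - (w·ϖ)²`, while
the mixed sum expands to `u²ϖ² + p²w² + 2 (u·p)(w·ϖ)`. Altogether
`𝒞 = (u² - w²)(p² - ϖ²) - (u·p + w·ϖ)²`, which vanishes when `H = D = 0`.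
-/

open Finset

section PairSums

variable {ι M : Type*} [Fintype ι] [LinearOrder ι] [LocallyFiniteOrderTop ι]
  [LocallyFiniteOrderBot ι]

theorem sum_sum_Iio_eq_sum_sum_Ioi [AddCommMonoid M] (g : ι → ι → M) :
    ∑ i, ∑ j ∈ Iio i, g i j = ∑ i, ∑ j ∈ Ioi i, g j i :=
  sum_comm' fun _ _ => by simp

theorem sum_eq_sum_Iio_add_add_sum_Ioi [AddCommMonoid M] (f : ι → M) (i : ι) :
    ∑ j, f j = ∑ j ∈ Iio i, f j + (f i + ∑ j ∈ Ioi i, f j) := by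
  rw [← sum_filter_add_sum_filter_not univ (· < i), filter_gt_eq_Iio, ← sum_cons notMem_Ioi_self,
    ← Ici_eq_cons_Ioi, ← filter_le_eq_Ici]
  simp only [not_lt]

theorem sum_sum_eq_sum_sum_Ioi_add_sum_diag [AddCommMonoid M] (g : ι → ι → M) :
    ∑ i, ∑ j, g i j = ∑ i, ∑ j ∈ Ioi i, (g i j + g j i) + ∑ i, g i i := by
  rw [sum_congr rfl fun i _ => sum_eq_sum_Iio_add_add_sum_Ioi (g i) i]
  simp only [sum_add_distrib, sum_sum_Iio_eq_sum_sum_Ioi]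
  abel

/-- **Lagrange's identity**. -/
theorem sum_sum_Ioi_mul_sub_mul_sq [CommRing M] (a b : ι → M) :
    ∑ i, ∑ j ∈ Ioi i, (a i * b j - a j * b i) ^ 2
      = (∑ i, a i ^ 2) * (∑ i, b i ^ 2) - (∑ i, a i * b i) ^ 2 := by
  rw [sq (∑ i, a i * b i), sum_mul_sum, sum_mul_sum, ← sum_sub_distrib]
  simp_rw [← sum_sub_distrib]
  rw [sum_sum_eq_sum_sum_Ioi_add_sum_diag]
  have hdiag : ∑ i, (a i ^ 2 * b i ^ 2 - a i * b i * (a i * b i)) = 0 :=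
    sum_eq_zero fun i _ => by ring
  rw [hdiag, add_zero]
  exact sum_congr rfl fun i _ => sum_congr rfl fun j _ => by ring

end PairSums

theorem sum_sum_mul_add_mul_sq {ι κ R : Type*} [Fintype ι] [Fintype κ] [CommRing R]
    (a b : ι → R) (c d : κ → R) :
    ∑ i, ∑ j, (a i * d j + b i * c j) ^ 2
      = (∑ i, a i ^ 2) * (∑ j, d j ^ 2) + (∑ i, b i ^ 2) * (∑ j, c j ^ 2)
        + 2 * (∑ i, a i * b i) * (∑ j, c j * d j) := by
  calc ∑ i, ∑ j, (a i * d j + b i * c j) ^ 2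
      = ∑ i, ∑ j, (a i ^ 2 * d j ^ 2 + b i ^ 2 * c j ^ 2 + 2 * (a i * b i) * (c j * d j)) :=
        sum_congr rfl fun i _ => sum_congr rfl fun j _ => by ring
    _ = _ := by simp only [sum_add_distrib, ← mul_sum, ← sum_mul]

/-- On the constraint surface H = D = 0, the quadratic Casimir
𝒞 = Σ_{i<j} A_{ij}² + Σ_{i<j} B_{ij}² − Σ_{i,j} C_{ij}² vanishes. -/
theorem casimir_vanishes_on_constraint_surface (p q : ℕ)
    (u pp : Fin p → ℝ) (w vv : Fin q → ℝ)
    (hH : ∑ j, (w j)^2 = ∑ i, (u i)^2)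
    (hD : (∑ i, u i * pp i) + ∑ j, w j * vv j = 0) :
    (∑ i, ∑ j ∈ Finset.Ioi i, (u i * pp j - u j * pp i)^2)
      + (∑ i, ∑ j ∈ Finset.Ioi i, (w i * vv j - w j * vv i)^2)
      - (∑ i, ∑ j, (-(u i * vv j) - pp i * w j)^2) = 0 := by
  have hC : ∑ i, ∑ j, (-(u i * vv j) - pp i * w j) ^ 2
      = ∑ i, ∑ j, (u i * vv j + pp i * w j) ^ 2 := by
    simp_rw [← neg_add', neg_sq]
  rw [sum_sum_Ioi_mul_sub_mul_sq, sum_sum_Ioi_mul_sub_mul_sq, hC, sum_sum_mul_add_mul_sq]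
  linear_combination ((∑ j, vv j ^ 2) - ∑ i, pp i ^ 2) * hH
    - ((∑ i, u i * pp i) + ∑ j, w j * vv j) * hD
end

section
/- Every point of the constraint surface with u ≠ 0 and w ≠ 0 is gauge-equivalent under the action of the lower-triangular group to a unique point satisfying u² = w² = 1, u·p = 0, and w·ϖ = 0. -/
open scoped BigOperators

/-- The gauge action of the lower-triangular group (parametrised by (λ, μ) ∈ ℝ²)
on phase space: (u,p) ↦ (e^λ u, μ e^λ u + e^{-λ} p),
(w,ϖ) ↦ (e^λ w, −μ e^λ w + e^{-λ} ϖ). -/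
noncomputable def gaugeAct (p q : ℕ) (lam mu : ℝ)
    (x : (Fin p → ℝ) × (Fin p → ℝ) × (Fin q → ℝ) × (Fin q → ℝ)) :
    (Fin p → ℝ) × (Fin p → ℝ) × (Fin q → ℝ) × (Fin q → ℝ) :=
  (Real.exp lam • x.1,
   mu • (Real.exp lam • x.1) + Real.exp (-lam) • x.2.1,
   Real.exp lam • x.2.2.1,
   (-mu) • (Real.exp lam • x.2.2.1) + Real.exp (-lam) • x.2.2.2)

private lemma sqlem (n : ℕ) (c : ℝ) (f : Fin n → ℝ) :
    ∑ i, (c * f i)^2 = c^2 * ∑ i, f i^2 := by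
  rw [Finset.mul_sum]
  exact Finset.sum_congr rfl (fun i _ => by ring)

private lemma dotlem (n : ℕ) (c d mu : ℝ) (f g : Fin n → ℝ) :
    ∑ i, (c * f i) * (mu * (c * f i) + d * g i)
      = mu * (c^2 * ∑ i, f i^2) + (c * d) * ∑ i, f i * g i := by
  rw [Finset.mul_sum, Finset.mul_sum, Finset.mul_sum, ← Finset.sum_add_distrib]
  exact Finset.sum_congr rfl (fun i _ => by ring)

/-- Every point of the constraint surface with u ≠ 0 and w ≠ 0 is gauge-equivalent
to a unique point satisfying u² = w² = 1, u·p = 0, w·ϖ = 0. -/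
theorem gauge_fixing_exists_unique (p q : ℕ)
    (x : (Fin p → ℝ) × (Fin p → ℝ) × (Fin q → ℝ) × (Fin q → ℝ))
    (hH : ∑ j, (x.2.2.1 j)^2 = ∑ i, (x.1 i)^2)
    (hD : (∑ i, x.1 i * x.2.1 i) + ∑ j, x.2.2.1 j * x.2.2.2 j = 0)
    (hu : x.1 ≠ 0) (hw : x.2.2.1 ≠ 0) :
    ∃! y : (Fin p → ℝ) × (Fin p → ℝ) × (Fin q → ℝ) × (Fin q → ℝ),
      (∃ lam mu : ℝ, y = gaugeAct p q lam mu x) ∧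
      (∑ i, (y.1 i)^2 = 1 ∧ ∑ j, (y.2.2.1 j)^2 = 1 ∧
        ∑ i, y.1 i * y.2.1 i = 0 ∧ ∑ j, y.2.2.1 j * y.2.2.2 j = 0) := by
  obtain ⟨i0, hi0⟩ := Function.ne_iff.mp hu
  have hi0' : x.1 i0 ≠ 0 := by simpa using hi0
  set a : ℝ := ∑ i, (x.1 i)^2 with ha_def
  have ha : 0 < a := by
    have h1 : (x.1 i0)^2 ≤ a :=
      Finset.single_le_sum (fun i _ => sq_nonneg (x.1 i)) (Finset.mem_univ i0)
    have h2 : 0 < (x.1 i0)^2 := by rw [← sq_abs]; exact pow_pos (abs_pos.mpr hi0') 2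
    linarith
  set s : ℝ := ∑ i, x.1 i * x.2.1 i with hs_def
  set lam0 : ℝ := -(Real.log a) / 2 with hlam0
  have he2 : (Real.exp lam0)^2 * a = 1 := by
    rw [sq, ← Real.exp_add]
    have : lam0 + lam0 = -Real.log a := by rw [hlam0]; ring
    rw [this, Real.exp_neg, Real.exp_log ha, inv_mul_cancel₀ ha.ne']
  -- general computation of the four quantities after a gauge transformation
  have key : ∀ lam mu : ℝ,
      (∑ i, ((gaugeAct p q lam mu x).1 i)^2 = (Real.exp lam)^2 * a) ∧
      (∑ j, ((gaugeAct p q lam mu x).2.2.1 j)^2 = (Real.exp lam)^2 * a) ∧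
      (∑ i, (gaugeAct p q lam mu x).1 i * (gaugeAct p q lam mu x).2.1 i
          = mu * ((Real.exp lam)^2 * a) + s) ∧
      (∑ j, (gaugeAct p q lam mu x).2.2.1 j * (gaugeAct p q lam mu x).2.2.2 j
          = -mu * ((Real.exp lam)^2 * a) + ∑ j, x.2.2.1 j * x.2.2.2 j) := by
    intro lam mu
    have hmulinv : Real.exp lam * Real.exp (-lam) = 1 := by
      rw [← Real.exp_add]; simp
    refine ⟨?_, ?_, ?_, ?_⟩
    · simpa only [gaugeAct, Pi.smul_apply, smul_eq_mul] using sqlem p (Real.exp lam) x.1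
    · have := sqlem q (Real.exp lam) x.2.2.1
      simp only [gaugeAct, Pi.smul_apply, smul_eq_mul]
      rw [this, hH]
    · have := dotlem p (Real.exp lam) (Real.exp (-lam)) mu x.1 x.2.1
      simp only [gaugeAct, Pi.smul_apply, Pi.add_apply, smul_eq_mul]
      rw [this, hmulinv, one_mul]
    · have := dotlem q (Real.exp lam) (Real.exp (-lam)) (-mu) x.2.2.1 x.2.2.2
      simp only [gaugeAct, Pi.smul_apply, Pi.add_apply, smul_eq_mul]
      rw [this, hmulinv, one_mul, hH]
  refine ⟨gaugeAct p q lam0 (-s) x, ⟨⟨lam0, -s, rfl⟩, ?_, ?_, ?_, ?_⟩, ?_⟩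
  · rw [(key lam0 (-s)).1, he2]
  · rw [(key lam0 (-s)).2.1, he2]
  · rw [(key lam0 (-s)).2.2.1, he2]; ring
  · rw [(key lam0 (-s)).2.2.2, he2]
    have : ∑ j, x.2.2.1 j * x.2.2.2 j = -s := by linarith [hD]
    rw [this]; ring
  · rintro y ⟨⟨lam, mu, rfl⟩, c1, c2, c3, c4⟩
    have h1 : (Real.exp lam)^2 * a = 1 := by rw [← (key lam mu).1, c1]
    have hE : Real.exp lam = Real.exp lam0 := by
      have hsq : (Real.exp lam)^2 = (Real.exp lam0)^2 :=
        mul_right_cancel₀ ha.ne' (h1.trans he2.symm)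
      nlinarith [Real.exp_pos lam, Real.exp_pos lam0]
    have hmu : mu = -s := by
      have h3 : mu * ((Real.exp lam)^2 * a) + s = 0 := by rw [← (key lam mu).2.2.1, c3]
      rw [h1, mul_one] at h3; linarith
    simp only [gaugeAct, Real.exp_neg, hE, hmu]
end

section
/- For p = 1, q > 1: if two points a, b of the reduced gauge slice {u₁² = 1, w² = 1, w·ϖ = 0, ϖ ≠ 0} have equal values of all observables B_{ij} = wᵢϖⱼ − wⱼϖᵢ and C_{1j} = −u₁ϖⱼ − p₁wⱼ (with p₁ = 0 on the slice, so C_{1j} = −u₁ϖⱼ), then a = b or a = −b (simultaneous sign flip of all of u, w, p, ϖ). -/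
open scoped BigOperators

/-- Separation for p = 1, q > 1: equal B and C observables on the gauge slice
force equality up to a simultaneous sign flip. -/
theorem separation_p_one (q : ℕ) (hq : 1 < q)
    (u1 u1' : ℝ) (w w' vv vv' : Fin q → ℝ)
    (hu : u1^2 = 1) (hu' : u1'^2 = 1)
    (hw : ∑ j, (w j)^2 = 1) (hw' : ∑ j, (w' j)^2 = 1)
    (hwv : ∑ j, w j * vv j = 0) (hwv' : ∑ j, w' j * vv' j = 0)
    (hv : vv ≠ 0) (hv' : vv' ≠ 0)
    (hB : ∀ i j, w i * vv j - w j * vv i = w' i * vv' j - w' j * vv' i)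
    (hC : ∀ j, -(u1 * vv j) = -(u1' * vv' j)) :
    (u1' = u1 ∧ w' = w ∧ vv' = vv) ∨ (u1' = -u1 ∧ w' = -w ∧ vv' = -vv) := by
  set ε : ℝ := u1' * u1 with hεdef
  have hεsq : ε ^ 2 = 1 := by
    have : ε ^ 2 = u1' ^ 2 * u1 ^ 2 := by rw [hεdef]; ring
    rw [this, hu, hu', mul_one]
  -- vv' = ε • vv
  have hvv'e : ∀ j, vv' j = ε * vv j := by
    intro j
    have h2 : u1 * vv j = u1' * vv' j := by have := hC j; linarith
    linear_combination (-u1') * h2 - (vv' j) * hu'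
  have hvve : ∀ j, vv j = ε * vv' j := by
    intro j
    rw [hvv'e j]
    linear_combination (-(vv j)) * hεsq
  -- pick k with vv k ≠ 0
  obtain ⟨k, hk⟩ : ∃ k, vv k ≠ 0 := by
    by_contra h
    push_neg at h
    exact hv (funext fun j => h j)
  set c : ℝ := (w k - ε * w' k) / vv k with hc
  have hd : ∀ i, (w i - ε * w' i) * vv k = (w k - ε * w' k) * vv i := by
    intro i
    have h := hB i k
    have h' := hvv'e i
    have h'' := hvv'e k
    linear_combination h + w' i * h'' - w' k * h'
  have hwi : ∀ i, w i - ε * w' i = c * vv i := by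
    intro i
    rw [hc, div_mul_eq_mul_div, eq_div_iff hk]
    linarith [hd i]
  -- orthogonality transported
  have hwv2 : ∑ j, w' j * vv j = 0 := by
    have : ∀ j ∈ Finset.univ, w' j * vv j = ε * (w' j * vv' j) := by
      intro j _
      rw [hvve j]; ring
    rw [Finset.sum_congr rfl this, ← Finset.mul_sum, hwv', mul_zero]
  -- norm expansion
  have hS : 0 < ∑ j, (vv j) ^ 2 := by
    apply Finset.sum_pos' (fun j _ => sq_nonneg _)
    exact ⟨k, Finset.mem_univ k, by positivity⟩
  have hsum : ∑ j, (w j) ^ 2 =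
      ∑ j, ((ε * w' j) ^ 2 + (2 * ε * c) * (w' j * vv j) + c ^ 2 * (vv j) ^ 2) := by
    refine Finset.sum_congr rfl fun j _ => ?_
    linear_combination (w j + ε * w' j + c * vv j) * hwi j
  rw [Finset.sum_add_distrib, Finset.sum_add_distrib] at hsum
  have hA : ∑ j, (ε * w' j) ^ 2 = 1 := by
    simp only [mul_pow]
    rw [← Finset.mul_sum, hw', hεsq, mul_one]
  have hM : ∑ j, (2 * ε * c) * (w' j * vv j) = 0 := by
    rw [← Finset.mul_sum, hwv2, mul_zero]
  have hQ : ∑ j, c ^ 2 * (vv j) ^ 2 = c ^ 2 * ∑ j, (vv j) ^ 2 := by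
    rw [← Finset.mul_sum]
  rw [hw, hA, hM, hQ] at hsum
  have hc0 : c = 0 := by
    have hcsq : c ^ 2 * ∑ j, (vv j) ^ 2 = 0 := by linarith
    have : c ^ 2 = 0 := by
      rcases mul_eq_zero.mp hcsq with h | h
      · exact h
      · exact absurd h (ne_of_gt hS)
    exact pow_eq_zero_iff (n := 2) (by norm_num) |>.mp this
  have hweq : ∀ i, w i = ε * w' i := by
    intro i
    have := hwi i
    rw [hc0, zero_mul] at this
    linarith
  have hw'eq : ∀ i, w' i = ε * w i := by
    intro i
    rw [hweq i]
    linear_combination (-(w' i)) * hεsq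
  have hu1' : u1' = ε * u1 := by
    rw [hεdef]
    linear_combination (-u1') * hu
  -- case on ε
  have hεε : ε * ε = 1 := by rw [← sq]; exact hεsq
  rcases mul_self_eq_one_iff.mp hεε with h1 | h1
  · left
    refine ⟨by rw [hu1', h1, one_mul], ?_, ?_⟩
    · funext i; rw [hw'eq i, h1, one_mul]
    · funext j; rw [hvv'e j, h1, one_mul]
  · right
    refine ⟨by rw [hu1', h1]; ring, ?_, ?_⟩
    · funext i; simp only [Pi.neg_apply]; rw [hw'eq i, h1]; ring
    · funext j; simp only [Pi.neg_apply]; rw [hvv'e j, h1]; ring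
end

section
/- Let p > 1, q > 1 and let a, b be points of the gauge slice {u² = w² = 1, u·p = 0, w·ϖ = 0} with 0 ≠ |p| ≠ |ϖ| ≠ 0 at both points. If all observables A_{ij}(a) = A_{ij}(b), B_{ij}(a) = B_{ij}(b), and C_{ij}(a) = C_{ij}(b), then b = a or b = −a (all four vectors simultaneously negated). -/
open scoped BigOperators

private lemma sum_lin_aux {k : ℕ} (f g : Fin k → ℝ) (A B : ℝ) :
    ∑ j, (A * f j + B * g j) = A * ∑ j, f j + B * ∑ j, g j := by
  rw [Finset.sum_add_distrib, ← Finset.mul_sum, ← Finset.mul_sum]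

private lemma sum_mul_comm' {k : ℕ} (f g : Fin k → ℝ) :
    ∑ j, f j * g j = ∑ j, g j * f j :=
  Finset.sum_congr rfl fun j _ => mul_comm _ _

private lemma scalar_endgame (P V A B C D F H : ℝ) (hP : P ≠ V)
    (s1 : F = C) (s3 : C = -B) (s4 : D = A * P)
    (s5 : P = A * D - C * B) (s6 : H = A * V) (s7 : V = A * H + C * F) :
    A ^ 2 = 1 ∧ B = 0 := by
  have eqP : P = A ^ 2 * P + B ^ 2 := by linear_combination s5 + A * s4 - B * s3
  have eqV : V = A ^ 2 * V + B ^ 2 := by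
    linear_combination s7 + A * s6 + C * s1 + (C - B) * s3
  have h1 : (P - V) * (1 - A ^ 2) = 0 := by linear_combination eqP - eqV
  have h2 : 1 - A ^ 2 = 0 := by
    rcases mul_eq_zero.mp h1 with h | h
    · exact absurd (sub_eq_zero.mp h) hP
    · exact h
  have hA2 : A ^ 2 = 1 := by linarith
  have hB2 : B ^ 2 = 0 := by linear_combination P * h2 - eqP
  exact ⟨hA2, by exact pow_eq_zero_iff (two_ne_zero).elim |>.mp hB2⟩

/-- Separation for p > 1, q > 1: on the gauge slice with 0 ≠ |p| ≠ |ϖ| ≠ 0,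
equality of all o(p,q) observables forces equality up to a simultaneous
sign flip of all four vectors. -/
theorem separation_general (n m : ℕ) (hn : 1 < n) (hm : 1 < m)
    (u p u' p' : Fin n → ℝ) (w v w' v' : Fin m → ℝ)
    (hu : ∑ i, (u i)^2 = 1) (hu' : ∑ i, (u' i)^2 = 1)
    (hw : ∑ j, (w j)^2 = 1) (hw' : ∑ j, (w' j)^2 = 1)
    (hup : ∑ i, u i * p i = 0) (hup' : ∑ i, u' i * p' i = 0)
    (hwv : ∑ j, w j * v j = 0) (hwv' : ∑ j, w' j * v' j = 0)
    (hp : p ≠ 0) (hp' : p' ≠ 0) (hv : v ≠ 0) (hv' : v' ≠ 0)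
    (hne : ∑ i, (p i)^2 ≠ ∑ j, (v j)^2)
    (hne' : ∑ i, (p' i)^2 ≠ ∑ j, (v' j)^2)
    (hA : ∀ i j, u i * p j - u j * p i = u' i * p' j - u' j * p' i)
    (hB : ∀ i j, w i * v j - w j * v i = w' i * v' j - w' j * v' i)
    (hC : ∀ i j, -(u i * v j) - p i * w j = -(u' i * v' j) - p' i * w' j) :
    (u' = u ∧ p' = p ∧ w' = w ∧ v' = v) ∨
    (u' = -u ∧ p' = -p ∧ w' = -w ∧ v' = -v) := by
  have hC' : ∀ i j, u i * v j + p i * w j = u' i * v' j + p' i * w' j := fun i j => by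
    linarith [hC i j]
  have hu2 : ∑ k, u k * u k = 1 := by simpa [pow_two] using hu
  have hu'2 : ∑ k, u' k * u' k = 1 := by simpa [pow_two] using hu'
  have hw'2 : ∑ l, w' l * w' l = 1 := by simpa [pow_two] using hw'
  have hpp : ∑ k, p k * p k = ∑ k, (p k) ^ 2 :=
    Finset.sum_congr rfl fun k _ => (pow_two _).symm
  have hvv2 : ∑ l, v l * v l = ∑ l, (v l) ^ 2 :=
    Finset.sum_congr rfl fun l _ => (pow_two _).symm
  have hpu : ∑ k, p k * u k = 0 := (sum_mul_comm' p u).trans hup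
  have hp'u' : ∑ k, p' k * u' k = 0 := (sum_mul_comm' p' u').trans hup'
  have hv'w' : ∑ l, v' l * w' l = 0 := (sum_mul_comm' v' w').trans hwv'
  have hvw : ∑ l, v l * w l = 0 := (sum_mul_comm' v w).trans hwv
  -- positivity
  have hPpos : 0 < ∑ k, (p k) ^ 2 := by
    obtain ⟨i0, hi0⟩ := Function.ne_iff.mp hp
    have hi0' : p i0 ≠ 0 := by simpa using hi0
    exact Finset.sum_pos' (fun k _ => sq_nonneg _)
      ⟨i0, Finset.mem_univ _, pow_two_pos_of_ne_zero hi0'⟩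
  have hVpos : 0 < ∑ l, (v l) ^ 2 := by
    obtain ⟨j0, hj0⟩ := Function.ne_iff.mp hv
    have hj0' : v j0 ≠ 0 := by simpa using hj0
    exact Finset.sum_pos' (fun l _ => sq_nonneg _)
      ⟨j0, Finset.mem_univ _, pow_two_pos_of_ne_zero hj0'⟩
  -- contraction identities
  have V13 : ∀ i, p' i = (∑ k, u k * u' k) * p i - (∑ k, p k * u' k) * u i := by
    intro i
    have key : ∑ k, (u i * (p k * u' k) + (-(p i)) * (u k * u' k))
        = ∑ k, (u' i * (p' k * u' k) + (-(p' i)) * (u' k * u' k)) :=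
      Finset.sum_congr rfl fun k _ => by linear_combination (u' k) * hA i k
    have L : ∑ k, (u i * (p k * u' k) + (-(p i)) * (u k * u' k))
        = u i * ∑ k, p k * u' k + (-(p i)) * ∑ k, u k * u' k :=
      sum_lin_aux _ _ _ _
    have R : ∑ k, (u' i * (p' k * u' k) + (-(p' i)) * (u' k * u' k))
        = u' i * ∑ k, p' k * u' k + (-(p' i)) * ∑ k, u' k * u' k :=
      sum_lin_aux _ _ _ _
    rw [L, R, hp'u', hu'2] at key
    linear_combination key
  have V11 : ∀ i, p i = (∑ k, u k * u' k) * p' i - (∑ k, u k * p' k) * u' i := by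
    intro i
    have key : ∑ k, (u i * (p k * u k) + (-(p i)) * (u k * u k))
        = ∑ k, (u' i * (p' k * u k) + (-(p' i)) * (u' k * u k)) :=
      Finset.sum_congr rfl fun k _ => by linear_combination (u k) * hA i k
    have L : ∑ k, (u i * (p k * u k) + (-(p i)) * (u k * u k))
        = u i * ∑ k, p k * u k + (-(p i)) * ∑ k, u k * u k :=
      sum_lin_aux _ _ _ _
    have R : ∑ k, (u' i * (p' k * u k) + (-(p' i)) * (u' k * u k))
        = u' i * ∑ k, p' k * u k + (-(p' i)) * ∑ k, u' k * u k :=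
      sum_lin_aux _ _ _ _
    rw [L, R, hpu, hu2, sum_mul_comm' p' u, sum_mul_comm' u' u] at key
    linear_combination -key
  have V4 : ∀ j, v' j = (∑ k, u k * u' k) * v j + (∑ k, p k * u' k) * w j := by
    intro j
    have key : ∑ k, (v j * (u k * u' k) + w j * (p k * u' k))
        = ∑ k, (v' j * (u' k * u' k) + w' j * (p' k * u' k)) :=
      Finset.sum_congr rfl fun k _ => by linear_combination (u' k) * hC' k j
    have L : ∑ k, (v j * (u k * u' k) + w j * (p k * u' k))
        = v j * ∑ k, u k * u' k + w j * ∑ k, p k * u' k :=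
      sum_lin_aux _ _ _ _
    have R : ∑ k, (v' j * (u' k * u' k) + w' j * (p' k * u' k))
        = v' j * ∑ k, u' k * u' k + w' j * ∑ k, p' k * u' k :=
      sum_lin_aux _ _ _ _
    rw [L, R, hu'2, hp'u'] at key
    linear_combination -key
  have V5 : ∀ j, v j = (∑ k, u k * u' k) * v' j + (∑ k, u k * p' k) * w' j := by
    intro j
    have key : ∑ k, (v j * (u k * u k) + w j * (p k * u k))
        = ∑ k, (v' j * (u' k * u k) + w' j * (p' k * u k)) :=
      Finset.sum_congr rfl fun k _ => by linear_combination (u k) * hC' k j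
    have L : ∑ k, (v j * (u k * u k) + w j * (p k * u k))
        = v j * ∑ k, u k * u k + w j * ∑ k, p k * u k :=
      sum_lin_aux _ _ _ _
    have R : ∑ k, (v' j * (u' k * u k) + w' j * (p' k * u k))
        = v' j * ∑ k, u' k * u k + w' j * ∑ k, p' k * u k :=
      sum_lin_aux _ _ _ _
    rw [L, R, hu2, hpu, sum_mul_comm' u' u, sum_mul_comm' p' u] at key
    linear_combination key
  have V6 : ∀ i, (∑ l, (v l) ^ 2) * u i
      = (∑ l, v l * v' l) * u' i + (∑ l, v l * w' l) * p' i := by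
    intro i
    have key : ∑ l, (u i * (v l * v l) + p i * (w l * v l))
        = ∑ l, (u' i * (v' l * v l) + p' i * (w' l * v l)) :=
      Finset.sum_congr rfl fun l _ => by linear_combination (v l) * hC' i l
    have L : ∑ l, (u i * (v l * v l) + p i * (w l * v l))
        = u i * ∑ l, v l * v l + p i * ∑ l, w l * v l :=
      sum_lin_aux _ _ _ _
    have R : ∑ l, (u' i * (v' l * v l) + p' i * (w' l * v l))
        = u' i * ∑ l, v' l * v l + p' i * ∑ l, w' l * v l :=
      sum_lin_aux _ _ _ _
    rw [L, R, hvv2, hwv, sum_mul_comm' v' v, sum_mul_comm' w' v] at key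
    linear_combination key
  have V9 : ∀ j, (∑ k, u k * p' k) * v j + (∑ k, p k * p' k) * w j
      = (∑ k, p' k * p' k) * w' j := by
    intro j
    have key : ∑ k, (v j * (u k * p' k) + w j * (p k * p' k))
        = ∑ k, (v' j * (u' k * p' k) + w' j * (p' k * p' k)) :=
      Finset.sum_congr rfl fun k _ => by linear_combination (p' k) * hC' k j
    have L : ∑ k, (v j * (u k * p' k) + w j * (p k * p' k))
        = v j * ∑ k, u k * p' k + w j * ∑ k, p k * p' k :=
      sum_lin_aux _ _ _ _
    have R : ∑ k, (v' j * (u' k * p' k) + w' j * (p' k * p' k))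
        = v' j * ∑ k, u' k * p' k + w' j * ∑ k, p' k * p' k :=
      sum_lin_aux _ _ _ _
    rw [L, R, hup'] at key
    linear_combination key
  -- scalar identities
  have S1 : ∑ l, v l * w' l = ∑ k, u k * p' k := by
    have key : ∑ l, v l * w' l
        = ∑ l, ((∑ k, u k * u' k) * (v' l * w' l) + (∑ k, u k * p' k) * (w' l * w' l)) :=
      Finset.sum_congr rfl fun l _ => by linear_combination (w' l) * V5 l
    have L : ∑ l, ((∑ k, u k * u' k) * (v' l * w' l) + (∑ k, u k * p' k) * (w' l * w' l))
        = (∑ k, u k * u' k) * ∑ l, v' l * w' l + (∑ k, u k * p' k) * ∑ l, w' l * w' l :=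
      sum_lin_aux _ _ _ _
    rw [key, L, hv'w', hw'2]
    ring
  have S3 : ∑ k, u k * p' k = -(∑ k, p k * u' k) := by
    have key : ∑ k, u k * p' k
        = ∑ k, ((∑ k, u k * u' k) * (u k * p k) + (-(∑ k, p k * u' k)) * (u k * u k)) :=
      Finset.sum_congr rfl fun k _ => by linear_combination (u k) * V13 k
    have L : ∑ k, ((∑ k, u k * u' k) * (u k * p k) + (-(∑ k, p k * u' k)) * (u k * u k))
        = (∑ k, u k * u' k) * ∑ k, u k * p k + (-(∑ k, p k * u' k)) * ∑ k, u k * u k :=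
      sum_lin_aux _ _ _ _
    rw [key, L, hup, hu2]
    ring
  have S4 : ∑ k, p k * p' k = (∑ k, u k * u' k) * (∑ k, (p k) ^ 2) := by
    have key : ∑ k, p k * p' k
        = ∑ k, ((∑ k, u k * u' k) * (p k * p k) + (-(∑ k, p k * u' k)) * (p k * u k)) :=
      Finset.sum_congr rfl fun k _ => by linear_combination (p k) * V13 k
    have L : ∑ k, ((∑ k, u k * u' k) * (p k * p k) + (-(∑ k, p k * u' k)) * (p k * u k))
        = (∑ k, u k * u' k) * ∑ k, p k * p k + (-(∑ k, p k * u' k)) * ∑ k, p k * u k :=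
      sum_lin_aux _ _ _ _
    rw [key, L, hpp, hpu]
    ring
  have S5 : ∑ k, (p k) ^ 2
      = (∑ k, u k * u' k) * (∑ k, p k * p' k) - (∑ k, u k * p' k) * (∑ k, p k * u' k) := by
    have key : ∑ k, p k * p k
        = ∑ k, ((∑ k, u k * u' k) * (p k * p' k) + (-(∑ k, u k * p' k)) * (p k * u' k)) :=
      Finset.sum_congr rfl fun k _ => by linear_combination (p k) * V11 k
    have L : ∑ k, ((∑ k, u k * u' k) * (p k * p' k) + (-(∑ k, u k * p' k)) * (p k * u' k))
        = (∑ k, u k * u' k) * ∑ k, p k * p' k + (-(∑ k, u k * p' k)) * ∑ k, p k * u' k :=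
      sum_lin_aux _ _ _ _
    rw [← hpp, key, L]
    ring
  have S6 : ∑ l, v l * v' l = (∑ k, u k * u' k) * (∑ l, (v l) ^ 2) := by
    have key : ∑ l, v l * v' l
        = ∑ l, ((∑ k, u k * u' k) * (v l * v l) + (∑ k, p k * u' k) * (v l * w l)) :=
      Finset.sum_congr rfl fun l _ => by linear_combination (v l) * V4 l
    have L : ∑ l, ((∑ k, u k * u' k) * (v l * v l) + (∑ k, p k * u' k) * (v l * w l))
        = (∑ k, u k * u' k) * ∑ l, v l * v l + (∑ k, p k * u' k) * ∑ l, v l * w l :=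
      sum_lin_aux _ _ _ _
    rw [key, L, hvv2, hvw]
    ring
  have S7 : ∑ l, (v l) ^ 2
      = (∑ k, u k * u' k) * (∑ l, v l * v' l) + (∑ k, u k * p' k) * (∑ l, v l * w' l) := by
    have key : ∑ l, v l * v l
        = ∑ l, ((∑ k, u k * u' k) * (v l * v' l) + (∑ k, u k * p' k) * (v l * w' l)) :=
      Finset.sum_congr rfl fun l _ => by linear_combination (v l) * V5 l
    have L : ∑ l, ((∑ k, u k * u' k) * (v l * v' l) + (∑ k, u k * p' k) * (v l * w' l))
        = (∑ k, u k * u' k) * ∑ l, v l * v' l + (∑ k, u k * p' k) * ∑ l, v l * w' l :=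
      sum_lin_aux _ _ _ _
    rw [← hvv2, key, L]
  -- endgame
  obtain ⟨hA2, hB0⟩ := scalar_endgame (∑ k, (p k) ^ 2) (∑ l, (v l) ^ 2)
    (∑ k, u k * u' k) (∑ k, p k * u' k) (∑ k, u k * p' k) (∑ k, p k * p' k)
    (∑ l, v l * w' l) (∑ l, v l * v' l) hne S1 S3 S4 S5 S6 S7
  have hC0 : ∑ k, u k * p' k = 0 := by rw [S3, hB0, neg_zero]
  have hF0 : ∑ l, v l * w' l = 0 := by rw [S1, hC0]
  have hu'eq : ∀ i, u' i = (∑ k, u k * u' k) * u i := by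
    intro i
    have h6 := V6 i
    rw [S6, hF0] at h6
    have hz : (∑ l, (v l) ^ 2) * (u' i - (∑ k, u k * u' k) * u i) = 0 := by
      linear_combination (-(∑ k, u k * u' k)) * h6 - ((∑ l, (v l) ^ 2) * u' i) * hA2
    rcases mul_eq_zero.mp hz with h | h
    · exact absurd h (ne_of_gt hVpos)
    · exact sub_eq_zero.mp h
  have hp'eq : ∀ i, p' i = (∑ k, u k * u' k) * p i := fun i => by
    linear_combination V13 i - (u i) * hB0
  have hv'eq : ∀ j, v' j = (∑ k, u k * u' k) * v j := fun j => by
    linear_combination V4 j + (w j) * hB0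
  have hp'p' : ∑ k, p' k * p' k = ∑ k, (p k) ^ 2 := by
    have key : ∑ k, p' k * p' k = ∑ k, (∑ k, u k * u' k) ^ 2 * (p k) ^ 2 :=
      Finset.sum_congr rfl fun k _ => by rw [hp'eq k]; ring
    rw [key, ← Finset.mul_sum, hA2, one_mul]
  have hw'eq : ∀ j, w' j = (∑ k, u k * u' k) * w j := by
    intro j
    have h9 := V9 j
    rw [hC0, S4, hp'p'] at h9
    have hz : (∑ k, (p k) ^ 2) * (w' j - (∑ k, u k * u' k) * w j) = 0 := by
      linear_combination -h9
    rcases mul_eq_zero.mp hz with h | h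
    · exact absurd h (ne_of_gt hPpos)
    · exact sub_eq_zero.mp h
  have hA1 : (∑ k, u k * u' k) = 1 ∨ (∑ k, u k * u' k) = -1 := by
    have hprod : ((∑ k, u k * u' k) - 1) * ((∑ k, u k * u' k) + 1) = 0 := by
      linear_combination hA2
    rcases mul_eq_zero.mp hprod with h | h
    · exact Or.inl (by linarith)
    · exact Or.inr (by linarith)
  rcases hA1 with h1 | h1
  · left
    refine ⟨funext fun i => ?_, funext fun i => ?_, funext fun j => ?_, funext fun j => ?_⟩
    · rw [hu'eq i, h1, one_mul]
    · rw [hp'eq i, h1, one_mul]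
    · rw [hw'eq j, h1, one_mul]
    · rw [hv'eq j, h1, one_mul]
  · right
    refine ⟨funext fun i => ?_, funext fun i => ?_, funext fun j => ?_, funext fun j => ?_⟩
    · rw [hu'eq i, h1]; simp
    · rw [hp'eq i, h1]; simp
    · rw [hw'eq j, h1]; simp
    · rw [hv'eq j, h1]; simp
end

section
/- If equality of the A-observables holds between two points of the gauge slice with u² = u'² = 1, u·p = u'·p' = 0 and p ≠ 0 ≠ p', then |p'| = |p| and there exists θ ∈ [0, 2π) with u' = cos θ · u + sin θ · p/|p| and p' = cos θ · p − sin θ · |p| · u. -/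
open scoped BigOperators

lemma exists_theta_aux (x y : ℝ) (h : x^2 + y^2 = 1) :
    ∃ θ, 0 ≤ θ ∧ θ < 2*Real.pi ∧ Real.cos θ = x ∧ Real.sin θ = y := by
  have hx1 : -1 ≤ x := by nlinarith
  have hx2 : x ≤ 1 := by nlinarith
  rcases le_or_gt 0 y with hy | hy
  · refine ⟨Real.arccos x, Real.arccos_nonneg x, ?_, Real.cos_arccos hx1 hx2, ?_⟩
    · have := Real.arccos_le_pi x
      have := Real.pi_pos
      linarith
    · rw [Real.sin_arccos, show 1 - x^2 = y^2 by linarith]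
      exact Real.sqrt_sq hy
  · have hxlt : x < 1 := by nlinarith
    refine ⟨2*Real.pi - Real.arccos x, ?_, ?_, ?_, ?_⟩
    · have := Real.arccos_le_pi x
      have := Real.pi_pos
      linarith
    · have := (Real.arccos_pos).2 hxlt
      linarith
    · rw [Real.cos_sub]
      simp [Real.cos_two_pi, Real.sin_two_pi, Real.cos_arccos hx1 hx2]
    · rw [Real.sin_sub]
      simp only [Real.cos_two_pi, Real.sin_two_pi]
      rw [Real.sin_arccos, show 1 - x^2 = y^2 by linarith]
      have : Real.sqrt (y^2) = -y := by
        rw [show y^2 = (-y)^2 by ring]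
        exact Real.sqrt_sq (by linarith)
      rw [this]; ring

lemma sum_comb3 {n : ℕ} (a b d : ℝ) (f g h : Fin n → ℝ) :
    ∑ i, (a * f i + b * g i + d * h i)
      = a * (∑ i, f i) + b * (∑ i, g i) + d * (∑ i, h i) := by
  rw [Finset.sum_add_distrib, Finset.sum_add_distrib,
    ← Finset.mul_sum, ← Finset.mul_sum, ← Finset.mul_sum]

/-- Equality of the A-observables between two points of the gauge slice forces
|p'| = |p| and a rotation by some angle θ ∈ [0, 2π) in the (u, p/|p|) plane. -/
theorem A_equality_gives_rotation (n : ℕ) (hn : 1 < n) (u p u' p' : Fin n → ℝ)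
    (hu : ∑ i, (u i)^2 = 1) (hu' : ∑ i, (u' i)^2 = 1)
    (hup : ∑ i, u i * p i = 0) (hup' : ∑ i, u' i * p' i = 0)
    (hp : p ≠ 0) (hp' : p' ≠ 0)
    (hA : ∀ i j, u i * p j - u j * p i = u' i * p' j - u' j * p' i) :
    (∑ i, (p' i)^2 = ∑ i, (p i)^2) ∧
    ∃ θ : ℝ, 0 ≤ θ ∧ θ < 2 * Real.pi ∧
      u' = Real.cos θ • u + (Real.sin θ / Real.sqrt (∑ i, (p i)^2)) • p ∧
      p' = Real.cos θ • p - (Real.sin θ * Real.sqrt (∑ i, (p i)^2)) • u := by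
  set c : ℝ := ∑ j, u j * u' j with hc
  set s : ℝ := ∑ j, p j * u' j with hs
  set P2 : ℝ := ∑ i, (p i)^2 with hP2
  set Q2 : ℝ := ∑ i, (p' i)^2 with hQ2
  have P2pos : 0 < P2 := by
    obtain ⟨i, hi⟩ : ∃ i, p i ≠ 0 := by
      by_contra h; push_neg at h; exact hp (funext h)
    exact Finset.sum_pos' (fun j _ => sq_nonneg _)
      ⟨i, Finset.mem_univ i, by positivity⟩
  have Q2pos : 0 < Q2 := by
    obtain ⟨i, hi⟩ : ∃ i, p' i ≠ 0 := by
      by_contra h; push_neg at h; exact hp' (funext h)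
    exact Finset.sum_pos' (fun j _ => sq_nonneg _)
      ⟨i, Finset.mem_univ i, by positivity⟩
  -- contract with u' : p' i = c * p i - s * u i
  have hp'eq : ∀ i, p' i = c * p i - s * u i := by
    intro i
    have key : ∑ j, (u i * p j - u j * p i) * u' j
        = ∑ j, (u' i * p' j - u' j * p' i) * u' j :=
      Finset.sum_congr rfl (fun j _ => by rw [hA i j])
    have L : ∑ j, (u i * p j - u j * p i) * u' j = u i * s - p i * c := by
      rw [hs, hc, Finset.mul_sum, Finset.mul_sum, ← Finset.sum_sub_distrib]
      exact Finset.sum_congr rfl (fun j _ => by ring)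
    have R : ∑ j, (u' i * p' j - u' j * p' i) * u' j = - p' i := by
      have : ∑ j, (u' i * p' j - u' j * p' i) * u' j
          = u' i * (∑ j, u' j * p' j) - p' i * (∑ j, (u' j)^2) := by
        rw [Finset.mul_sum, Finset.mul_sum, ← Finset.sum_sub_distrib]
        exact Finset.sum_congr rfl (fun j _ => by ring)
      rw [this, hup', hu']; ring
    rw [L, R] at key; linarith
  -- auxiliary contractions
  have hpp' : ∑ j, p j * p' j = c * P2 := by
    calc ∑ j, p j * p' j = ∑ j, (c * (p j)^2 - s * (u j * p j)) := by
          exact Finset.sum_congr rfl (fun j _ => by rw [hp'eq j]; ring)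
      _ = c * (∑ j, (p j)^2) - s * (∑ j, u j * p j) := by
          rw [Finset.mul_sum, Finset.mul_sum, Finset.sum_sub_distrib]
      _ = c * P2 := by rw [hup]; ring
  have hupr : ∑ j, u j * p' j = -s := by
    calc ∑ j, u j * p' j = ∑ j, (c * (u j * p j) - s * (u j)^2) := by
          exact Finset.sum_congr rfl (fun j _ => by rw [hp'eq j]; ring)
      _ = c * (∑ j, u j * p j) - s * (∑ j, (u j)^2) := by
          rw [Finset.mul_sum, Finset.mul_sum, Finset.sum_sub_distrib]
      _ = -s := by rw [hup, hu]; ring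
  -- contract with p' : u' i * Q2 = c * P2 * u i + s * p i
  have hu'eq : ∀ i, u' i * Q2 = c * P2 * u i + s * p i := by
    intro i
    have key : ∑ j, (u i * p j - u j * p i) * p' j
        = ∑ j, (u' i * p' j - u' j * p' i) * p' j :=
      Finset.sum_congr rfl (fun j _ => by rw [hA i j])
    have L : ∑ j, (u i * p j - u j * p i) * p' j
        = u i * (∑ j, p j * p' j) - p i * (∑ j, u j * p' j) := by
      rw [Finset.mul_sum, Finset.mul_sum, ← Finset.sum_sub_distrib]
      exact Finset.sum_congr rfl (fun j _ => by ring)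
    have R : ∑ j, (u' i * p' j - u' j * p' i) * p' j = u' i * Q2 := by
      have : ∑ j, (u' i * p' j - u' j * p' i) * p' j
          = u' i * (∑ j, (p' j)^2) - p' i * (∑ j, u' j * p' j) := by
        rw [Finset.mul_sum, Finset.mul_sum, ← Finset.sum_sub_distrib]
        exact Finset.sum_congr rfl (fun j _ => by ring)
      rw [this, hup']; ring
    rw [L, R, hpp', hupr] at key
    rw [← key]; ring
  -- Q2 = c^2 P2 + s^2
  have hQval : Q2 = c^2 * P2 + s^2 := by
    calc Q2 = ∑ i, (c^2 * (p i)^2 + (-(2*c*s)) * (u i * p i) + s^2 * (u i)^2) :=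
          Finset.sum_congr rfl (fun i _ => by rw [hp'eq i]; ring)
      _ = c^2 * (∑ i, (p i)^2) + (-(2*c*s)) * (∑ i, u i * p i)
            + s^2 * (∑ i, (u i)^2) := sum_comb3 _ _ _ _ _ _
      _ = c^2 * P2 + s^2 := by rw [hup, hu]; ring
  -- Q2^2 = P2 * Q2 via summing squares of hu'eq
  have hQQ : Q2 * Q2 = P2 * Q2 := by
    have e1 : ∑ i, (u' i * Q2)^2 = Q2^2 := by
      calc ∑ i, (u' i * Q2)^2 = Q2^2 * ∑ i, (u' i)^2 := by
            rw [Finset.mul_sum]; exact Finset.sum_congr rfl (fun i _ => by ring)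
        _ = Q2^2 := by rw [hu']; ring
    have e2 : ∑ i, (c * P2 * u i + s * p i)^2 = P2 * Q2 := by
      calc ∑ i, (c * P2 * u i + s * p i)^2
          = ∑ i, ((c*P2)^2 * (u i)^2 + (2*(c*P2)*s) * (u i * p i)
              + s^2 * (p i)^2) :=
            Finset.sum_congr rfl (fun i _ => by ring)
        _ = (c*P2)^2 * (∑ i, (u i)^2) + (2*(c*P2)*s) * (∑ i, u i * p i)
              + s^2 * (∑ i, (p i)^2) := sum_comb3 _ _ _ _ _ _
        _ = P2 * Q2 := by rw [hu, hup, hQval]; ring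
    have : ∑ i, (u' i * Q2)^2 = ∑ i, (c * P2 * u i + s * p i)^2 :=
      Finset.sum_congr rfl (fun i _ => by rw [hu'eq i])
    rw [e1, e2] at this
    nlinarith [this]
  have hQP : Q2 = P2 := by
    have := mul_right_cancel₀ (ne_of_gt Q2pos) hQQ
    exact this
  refine ⟨hQP, ?_⟩
  -- construct θ
  have hsq : Real.sqrt P2 ^ 2 = P2 := Real.sq_sqrt P2pos.le
  have hsqpos : 0 < Real.sqrt P2 := Real.sqrt_pos.2 P2pos
  have hcirc : c^2 + (s / Real.sqrt P2)^2 = 1 := by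
    have : c^2 * P2 + s^2 = P2 := by rw [← hQval, hQP]
    field_simp [hsq]
    nlinarith [this]
  obtain ⟨θ, hθ0, hθ2, hcos, hsin⟩ := exists_theta_aux c (s / Real.sqrt P2) hcirc
  refine ⟨θ, hθ0, hθ2, ?_, ?_⟩
  · funext i
    have h1 := hu'eq i
    rw [hQP] at h1
    have hPsqrt : Real.sqrt P2 * Real.sqrt P2 = P2 := Real.mul_self_sqrt P2pos.le
    simp only [Pi.add_apply, Pi.smul_apply, smul_eq_mul]
    rw [hcos, hsin, div_div, hPsqrt]
    field_simp
    linarith [h1]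
  · funext i
    simp only [Pi.sub_apply, Pi.smul_apply, smul_eq_mul]
    rw [hcos, hsin, hp'eq i]
    have : s / Real.sqrt P2 * Real.sqrt P2 = s := by
      field_simp
    rw [this]
end

section
/- Let K : ℕ×ℕ → ℝ_{>0} and integers p ≥ 2, q ≥ 2 with p + q odd. Suppose K satisfies [l + j + (p+q−4)/2]·K_{l+1,j+1} = [l + j + (p+q)/2]·K_{l,j} and [l − j − 1 + (p−q)/2]·K_{l+1,j} = [l − j + 1 + (p−q)/2]·K_{l,j+1} for all l, j in an index set containing either all (l,j) with l+j even, or all with l+j odd (here the half-integer shifts make all bracketed coefficients nonzero). Then no such strictly positive K exists. -/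
/-- For p, q ≥ 2 with p + q odd, there is no strictly positive K on a parity
class of indices satisfying the two recursion relations coming from
self-adjointness of Ĉ_{pq}. -/
theorem no_positive_K_for_odd_dimension (p q : ℕ) (hp : 2 ≤ p) (hq : 2 ≤ q)
    (hodd : Odd (p + q)) (ε : ℕ) (hε : ε < 2) (K : ℕ → ℕ → ℝ)
    (hpos : ∀ l j : ℕ, (l + j) % 2 = ε → 0 < K l j)
    (hrec1 : ∀ l j : ℕ, (l + j) % 2 = ε →
      ((l : ℝ) + j + ((p : ℝ) + q - 4) / 2) * K (l + 1) (j + 1)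
        = ((l : ℝ) + j + ((p : ℝ) + q) / 2) * K l j)
    (hrec2 : ∀ l j : ℕ, (l + j + 1) % 2 = ε →
      ((l : ℝ) - j - 1 + ((p : ℝ) - q) / 2) * K (l + 1) j
        = ((l : ℝ) - j + 1 + ((p : ℝ) - q) / 2) * K l (j + 1)) :
    False := by
  obtain ⟨k, hk⟩ := hodd
  -- p - q is odd: (p:ℤ) - q = 2*a + 1
  set a : ℤ := (k : ℤ) - q with ha
  have hpq : (p : ℤ) - q = 2 * a + 1 := by omega
  -- choose m ∈ {-a, -a-1} with the right parity
  by_cases hcase : ((-a).toNat + a.toNat + 1) % 2 = ε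
  · -- m = -a, so 2*(l - j) + (p - q) = 1
    set l : ℕ := (-a).toNat with hl
    set j : ℕ := a.toNat with hj
    have hpar : (l + j + 1) % 2 = ε := hcase
    have hm : 2 * ((l : ℤ) - (j : ℤ)) + ((p : ℤ) - (q : ℤ)) = 1 := by omega
    have hmR : 2 * ((l : ℝ) - (j : ℝ)) + ((p : ℝ) - (q : ℝ)) = 1 := by
      exact_mod_cast hm
    have h2 := hrec2 l j hpar
    have hK1 : 0 < K (l + 1) j := hpos (l + 1) j (by omega)
    have hK2 : 0 < K l (j + 1) := hpos l (j + 1) (by omega)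
    have e1 : ((l : ℝ) - j - 1 + ((p : ℝ) - q) / 2) = -(1 / 2) := by linarith
    have e2 : ((l : ℝ) - j + 1 + ((p : ℝ) - q) / 2) = 3 / 2 := by linarith
    rw [e1, e2] at h2
    nlinarith [hK1, hK2]
  · -- m = -a - 1, so 2*(l - j) + (p - q) = -1
    set l : ℕ := (-a - 1).toNat with hl
    set j : ℕ := (a + 1).toNat with hj
    have hpar : (l + j + 1) % 2 = ε := by omega
    have hm : 2 * ((l : ℤ) - (j : ℤ)) + ((p : ℤ) - (q : ℤ)) = -1 := by omega
    have hmR : 2 * ((l : ℝ) - (j : ℝ)) + ((p : ℝ) - (q : ℝ)) = -1 := by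
      exact_mod_cast hm
    have h2 := hrec2 l j hpar
    have hK1 : 0 < K (l + 1) j := hpos (l + 1) j (by omega)
    have hK2 : 0 < K l (j + 1) := hpos l (j + 1) (by omega)
    have e1 : ((l : ℝ) - j - 1 + ((p : ℝ) - q) / 2) = -(3 / 2) := by linarith
    have e2 : ((l : ℝ) - j + 1 + ((p : ℝ) - q) / 2) = 1 / 2 := by linarith
    rw [e1, e2] at h2
    nlinarith [hK1, hK2]
end

section
/- Let Hermite-basis vectors φ̃_{mn} (m, n ≥ 0) be an orthonormal basis of a Hilbert space, and suppose y = Σ_{m,n} a_{mn} φ̃_{2m,2n} satisfies, for all m, n ≥ 0, the recursion a_{m+1,n+1} = sqrt[ ((m+1/2)(n+1/2)) / ((m+1)(n+1)) ] · a_{mn} implied by orthogonality to all vectors Ĉ φ̃_{2m+1,2n+1} where Ĉ φ̃_{mn} = i(−√((m+1)(n+1)) φ̃_{m+1,n+1} + √(mn) φ̃_{m−1,n−1}). If y has finite ℓ² norm, i.e. Σ|a_{mn}|² < ∞, then y = 0. -/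
set_option maxHeartbeats 1000000 in
/-- If the coefficients a_{mn} satisfy the diagonal recursion
a_{m+1,n+1} = √(((m+1/2)(n+1/2))/((m+1)(n+1))) · a_{mn} and are square
summable, then all coefficients vanish. -/
theorem square_summable_recursion_zero (a : ℕ → ℕ → ℂ)
    (hrec : ∀ m n : ℕ, a (m + 1) (n + 1)
      = (Real.sqrt ((((m : ℝ) + 1/2) * ((n : ℝ) + 1/2)) /
          (((m : ℝ) + 1) * ((n : ℝ) + 1))) : ℂ) * a m n)
    (hsum : Summable fun mn : ℕ × ℕ => ‖a mn.1 mn.2‖ ^ 2) :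
    ∀ m n, a m n = 0 := by
  intro m n
  by_contra h
  have hC : 0 < ‖a m n‖ ^ 2 := by
    have := norm_pos_iff.mpr h
    positivity
  set C : ℝ := ‖a m n‖ ^ 2 with hCdef
  -- key lower bound along the diagonal
  have key : ∀ k : ℕ, C ≤ (4 * (k : ℝ) + 1) * ‖a (m + k) (n + k)‖ ^ 2 := by
    intro k
    induction k with
    | zero => simp [hCdef]
    | succ k ih =>
      have hM : (0 : ℝ) ≤ (m : ℝ) := Nat.cast_nonneg m
      have hN : (0 : ℝ) ≤ (n : ℝ) := Nat.cast_nonneg n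
      have hk : (0 : ℝ) ≤ (k : ℝ) := Nat.cast_nonneg k
      set M : ℝ := (m : ℝ) + (k : ℝ) with hMdef
      set N : ℝ := (n : ℝ) + (k : ℝ) with hNdef
      have hs0 : 0 ≤ ((M + 1/2) * (N + 1/2)) / ((M + 1) * (N + 1)) := by positivity
      have hQ : (0 : ℝ) < (M + 1) * (N + 1) := by positivity
      have hnorm : ‖a (m + (k + 1)) (n + (k + 1))‖ ^ 2
          = ((M + 1/2) * (N + 1/2)) / ((M + 1) * (N + 1)) * ‖a (m + k) (n + k)‖ ^ 2 := by
        have hr := hrec (m + k) (n + k)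
        have hcast : ((((m + k : ℕ) : ℝ) + 1/2) * (((n + k : ℕ) : ℝ) + 1/2)) /
            ((((m + k : ℕ) : ℝ) + 1) * (((n + k : ℕ) : ℝ) + 1))
            = ((M + 1/2) * (N + 1/2)) / ((M + 1) * (N + 1)) := by
          push_cast [hMdef, hNdef]; ring_nf
        rw [show m + (k + 1) = (m + k) + 1 from rfl, show n + (k + 1) = (n + k) + 1 from rfl,
          hr, hcast, norm_mul, mul_pow, Complex.norm_real, Real.norm_eq_abs,
          sq_abs, Real.sq_sqrt hs0]
      -- the ratio is at least (4k+1)/(4k+5)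
      have hratio : (4 * (k : ℝ) + 1) ≤ (4 * (k : ℝ) + 5) *
          (((M + 1/2) * (N + 1/2)) / ((M + 1) * (N + 1))) := by
        rw [mul_div_assoc', le_div_iff₀ hQ]
        nlinarith [mul_nonneg hM hN, mul_nonneg hM hk, mul_nonneg hN hk, sq_nonneg ((k : ℝ))]
      have hf0 : (0 : ℝ) ≤ ‖a (m + k) (n + k)‖ ^ 2 := by positivity
      calc C ≤ (4 * (k : ℝ) + 1) * ‖a (m + k) (n + k)‖ ^ 2 := ih
        _ ≤ ((4 * (k : ℝ) + 5) * (((M + 1/2) * (N + 1/2)) / ((M + 1) * (N + 1))))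
              * ‖a (m + k) (n + k)‖ ^ 2 := by
            exact mul_le_mul_of_nonneg_right hratio hf0
        _ = (4 * ((k : ℝ) + 1) + 1) * ‖a (m + (k + 1)) (n + (k + 1))‖ ^ 2 := by
            rw [hnorm]; ring
        _ = (4 * ((k + 1 : ℕ) : ℝ) + 1) * ‖a (m + (k + 1)) (n + (k + 1))‖ ^ 2 := by
            push_cast; ring
  -- summability along the diagonal
  have hg : Function.Injective (fun k : ℕ => ((m + k, n + k) : ℕ × ℕ)) := by
    intro i j hij
    simp only [Prod.mk.injEq] at hij
    omega
  have hdiag : Summable (fun k : ℕ => ‖a (m + k) (n + k)‖ ^ 2) := by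
    have := hsum.comp_injective hg
    exact this
  -- comparison with the harmonic series yields a contradiction
  have h1 : Summable (fun k : ℕ => C / (4 * (k : ℝ) + 1)) := by
    apply Summable.of_nonneg_of_le (fun k => by positivity) (fun k => ?_) hdiag
    rw [div_le_iff₀ (by positivity)]
    calc C ≤ (4 * (k : ℝ) + 1) * ‖a (m + k) (n + k)‖ ^ 2 := key k
      _ = ‖a (m + k) (n + k)‖ ^ 2 * (4 * (k : ℝ) + 1) := by ring
  have h2 : Summable (fun k : ℕ => 1 / ((k : ℝ) + 1)) := by
    apply Summable.of_nonneg_of_le (fun k => by positivity) (fun k => ?_)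
      (h1.mul_left (4 / C))
    have heq : 4 / C * (C / (4 * (k : ℝ) + 1)) = 4 / (4 * (k : ℝ) + 1) := by
      field_simp
    rw [heq, div_le_div_iff₀ (by positivity) (by positivity)]
    nlinarith [Nat.cast_nonneg (α := ℝ) k]
  have h3 : Summable (fun k : ℕ => 1 / ((k + 1 : ℕ) : ℝ)) := by
    convert h2 using 2 with k
    push_cast
    ring
  exact Real.not_summable_one_div_natCast
    ((summable_nat_add_iff (f := fun n : ℕ => 1 / (n : ℝ)) 1).mp h3)
end
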